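/- arXiv:1506.03050 — 4 statements merged into one kernel-verified Lean document; each statement's English description precedes it below -/
import Mathlib

section
/- The coefficients $w_g$ of the power series $\prod_{r \ge 1}(1+q^r)^{-e} \cdot \prod_{s \ge 1}(1-q^{2s})^{-(24-e)/2}$ with $e < 0$ even form a strictly increasing sequence: $w_1 < w_2 < w_3 < \dots$, with $w_1 = -e$. -/
open PowerSeries Finset

/-- Integer power of a power series over `ℚ`, using the power-series inverse
for negative exponents. -/
noncomputable def zp (f : PowerSeries ℚ) (n : ℤ) : PowerSeries ℚ :=
  if 0 ≤ n then f ^ n.toNat else f⁻¹ ^ (-n).toNat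

/-- The coefficient `w_g` of `∏_{r ≥ 1} (1+q^r)^{-e} · ∏_{s ≥ 1} (1-q^{2s})^{-(24-e)/2}`.
Since each factor with index `> g` is `1 + O(q^{g+1})`, the coefficient of `q^g`
equals that of the product truncated at index `g`. -/
noncomputable def W (e : ℤ) (g : ℕ) : ℚ :=
  PowerSeries.coeff (R := ℚ) g
    ((∏ r ∈ Icc 1 g, zp (1 + PowerSeries.X ^ r) (-e)) *
     (∏ s ∈ Icc 1 g, zp (1 - PowerSeries.X ^ (2 * s)) (-((24 - e) / 2))))

/-- The coefficient `c_g` of the Yau–Zaslow series `∏_{s ≥ 1} (1-q^s)^{-24}`. -/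
noncomputable def C (g : ℕ) : ℚ :=
  PowerSeries.coeff (R := ℚ) g (∏ s ∈ Icc 1 g, ((1 - PowerSeries.X ^ s)⁻¹) ^ 24)

/-
With `a = -e ≥ 2` and `b = (24 - e)/2 ≥ 2`, the identity `(1 + q)(1 - q²)⁻¹ = (1 - q)⁻¹`
pulls `(1 - q)⁻²` out of the product: it equals `(1 - q)⁻² U` with `U` having nonnegative
coefficients and constant term `1`. Hence `w_{g+1} - w_g`, the `q^{g+1}`-coefficient of
`(1 - q)⁻¹ U`, is a partial sum of the coefficients of `U`, so it is at least `1`.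
-/
theorem dvd_mul_sub_one {R : Type*} [CommRing R] {d f g : R} (hf : d ∣ f - 1) (hg : d ∣ g - 1) :
    d ∣ f * g - 1 := by
  have h : f * g - 1 = (f - 1) * g + (g - 1) := by ring
  rw [h]
  exact dvd_add (dvd_mul_of_dvd_left hf g) hg

namespace PowerSeries

section Nonneg

variable (R : Type*) [Semiring R] [PartialOrder R] [IsOrderedRing R]

def nonnegCoeffs : Subsemiring R⟦X⟧ where
  carrier := {f | ∀ n, 0 ≤ coeff n f}
  mul_mem' {f g} hf hg n := by
    rw [coeff_mul]
    exact sum_nonneg fun p _ => mul_nonneg (hf _) (hg _)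
  one_mem' n := by
    rw [coeff_one]
    split_ifs <;> simp
  add_mem' {f g} hf hg n := by
    rw [map_add]
    exact add_nonneg (hf n) (hg n)
  zero_mem' n := by simp

variable {R}

theorem X_mem_nonnegCoeffs : X ∈ nonnegCoeffs R := fun n => by
  rw [coeff_X]
  split_ifs <;> simp

theorem coeff_mul_coeff_le_coeff_mul {f g : R⟦X⟧} (hf : f ∈ nonnegCoeffs R)
    (hg : g ∈ nonnegCoeffs R) (i j : ℕ) :
    coeff i f * coeff j g ≤ coeff (i + j) (f * g) := by
  rw [coeff_mul]
  exact single_le_sum (f := fun p => coeff p.1 f * coeff p.2 g)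
    (fun p _ => mul_nonneg (hf _) (hg _))
    (show (i, j) ∈ antidiagonal (i + j) from mem_antidiagonal.mpr rfl)

end Nonneg

theorem coeff_inv_one_sub_X_pow {K : Type*} [Field K] {n : ℕ} (hn : 0 < n) (k : ℕ) :
    coeff k ((1 - X ^ n : K⟦X⟧)⁻¹) = if n ∣ k then 1 else 0 := by
  suffices h : (1 - X ^ n : K⟦X⟧)⁻¹ = mk fun k => if n ∣ k then 1 else 0 by
    rw [h, coeff_mk]
  rw [inv_eq_iff_mul_eq_one (by simp [hn.ne'])]
  ext k
  rw [mul_sub, mul_one, map_sub, coeff_mul_X_pow', coeff_mk, coeff_one]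
  rcases Nat.eq_zero_or_pos k with rfl | hk
  · simp [hn.ne']
  · by_cases hnk : n ≤ k
    · simp [coeff_mk, Nat.dvd_sub_iff_left hnk dvd_rfl, hnk, hk.ne']
    · have : ¬ n ∣ k := fun h => hnk (Nat.le_of_dvd hk h)
      simp [hnk, this, hk.ne']

theorem inv_one_sub_X_pow_mem_nonnegCoeffs {K : Type*} [Field K] [LinearOrder K]
    [IsStrictOrderedRing K] {n : ℕ} (hn : 0 < n) : (1 - X ^ n : K⟦X⟧)⁻¹ ∈ nonnegCoeffs K :=
  fun k => by
    rw [coeff_inv_one_sub_X_pow hn]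
    split_ifs <;> simp

theorem X_pow_dvd_inv_one_sub_X_pow_sub_one {K : Type*} [Field K] (n : ℕ) :
    X ^ n ∣ (1 - X ^ n : K⟦X⟧)⁻¹ - 1 := by
  rcases Nat.eq_zero_or_pos n with rfl | hn
  · simp
  refine ⟨(1 - X ^ n)⁻¹, ?_⟩
  have h := PowerSeries.inv_mul_cancel (1 - X ^ n : K⟦X⟧) (by simp [hn.ne'])
  linear_combination h

theorem coeff_mul_eq_of_X_pow_dvd_sub_one {R : Type*} [CommRing R] {f : R⟦X⟧} {n : ℕ}
    (hf : X ^ (n + 1) ∣ f - 1) (P : R⟦X⟧) : coeff n (P * f) = coeff n P := by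
  have h : X ^ (n + 1) ∣ P * f - P := by
    simpa only [mul_sub, mul_one] using dvd_mul_of_dvd_right hf P
  rw [← sub_eq_zero, ← map_sub]
  exact X_pow_dvd_iff.mp h n n.lt_succ_self

theorem one_add_X_mul_inv_one_sub_X_sq {K : Type*} [Field K] :
    (1 + X : K⟦X⟧) * (1 - X ^ 2)⁻¹ = (1 - X)⁻¹ := by
  have h : (1 - X ^ 2 : K⟦X⟧) = (1 - X) * (1 + X) := by ring
  rw [h, PowerSeries.mul_inv_rev, ← mul_assoc, PowerSeries.mul_inv_cancel _ (by simp), one_mul]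

theorem coeff_one_one_add_X_pow {R : Type*} [CommSemiring R] (a : ℕ) :
    coeff 1 ((1 + X : R⟦X⟧) ^ a) = a := by
  have h := Polynomial.coeff_one_add_X_pow R a 1
  rw [← Polynomial.coeff_coe] at h
  simpa using h

end PowerSeries

open PowerSeries

section WProduct

variable (K : Type*) [Field K]

-- The `r`-th factor of the product defining `W e`, with `a = -e` and `b = (24 - e) / 2`.
noncomputable def wFactor (a b r : ℕ) : K⟦X⟧ := (1 + X ^ r) ^ a * ((1 - X ^ (2 * r))⁻¹) ^ b

noncomputable def wProd (a b N : ℕ) : K⟦X⟧ := ∏ r ∈ Icc 1 N, wFactor K a b r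

variable {K}

theorem X_pow_dvd_wFactor_sub_one (a b r : ℕ) : X ^ r ∣ wFactor K a b r - 1 := by
  have h₁ : X ^ r ∣ (1 + X ^ r : K⟦X⟧) - 1 := by simp
  have h₂ : X ^ r ∣ (1 - X ^ (2 * r) : K⟦X⟧)⁻¹ - 1 :=
    (pow_dvd_pow X (by omega)).trans (X_pow_dvd_inv_one_sub_X_pow_sub_one _)
  exact dvd_mul_sub_one (h₁.trans (sub_one_dvd_pow_sub_one _ a))
    (h₂.trans (sub_one_dvd_pow_sub_one _ b))

theorem constantCoeff_wFactor (a b : ℕ) {r : ℕ} (hr : 0 < r) :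
    constantCoeff (wFactor K a b r) = 1 := by
  simp [wFactor, hr.ne']

theorem wFactor_mem_nonnegCoeffs [LinearOrder K] [IsStrictOrderedRing K] (a b : ℕ) {r : ℕ}
    (hr : 0 < r) : wFactor K a b r ∈ nonnegCoeffs K :=
  mul_mem (pow_mem (add_mem (one_mem _) (pow_mem X_mem_nonnegCoeffs r)) a)
    (pow_mem (inv_one_sub_X_pow_mem_nonnegCoeffs (by omega)) b)

theorem coeff_one_wFactor_one (a b : ℕ) : coeff 1 (wFactor K a b 1) = a := by
  have h : X ^ 2 ∣ ((1 - X ^ (2 * 1) : K⟦X⟧)⁻¹) ^ b - 1 :=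
    (X_pow_dvd_inv_one_sub_X_pow_sub_one _).trans (sub_one_dvd_pow_sub_one _ b)
  rw [wFactor, coeff_mul_eq_of_X_pow_dvd_sub_one h, pow_one, coeff_one_one_add_X_pow]

theorem wFactor_one_eq {a b : ℕ} (ha : 2 ≤ a) (hb : 2 ≤ b) :
    wFactor K a b 1 = ((1 - X)⁻¹) ^ 2 * wFactor K (a - 2) (b - 2) 1 := by
  obtain ⟨a, rfl⟩ := Nat.exists_eq_add_of_le ha
  obtain ⟨b, rfl⟩ := Nat.exists_eq_add_of_le hb
  simp only [wFactor, pow_one, mul_one, Nat.add_sub_cancel_left, pow_add,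
    ← one_add_X_mul_inv_one_sub_X_sq]
  ring

theorem coeff_wProd_succ (a b g : ℕ) :
    coeff g (wProd K a b (g + 1)) = coeff g (wProd K a b g) := by
  rw [wProd, prod_Icc_succ_top (by omega),
    coeff_mul_eq_of_X_pow_dvd_sub_one (X_pow_dvd_wFactor_sub_one a b (g + 1)), wProd]

theorem wProd_eq {a b N : ℕ} (ha : 2 ≤ a) (hb : 2 ≤ b) (hN : 1 ≤ N) :
    wProd K a b N =
      ((1 - X)⁻¹) ^ 2 * (wFactor K (a - 2) (b - 2) 1 * ∏ r ∈ Icc 2 N, wFactor K a b r) := by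
  rw [wProd, Icc_eq_cons_Ioc hN, prod_cons, ← Icc_add_one_left_eq_Ioc, one_add_one_eq_two,
    wFactor_one_eq ha hb, mul_assoc]

end WProduct

theorem coeff_lt_coeff_succ_of_mem_nonnegCoeffs {K : Type*} [Field K] [LinearOrder K]
    [IsStrictOrderedRing K] {U : K⟦X⟧} (hU : U ∈ nonnegCoeffs K) (hU₀ : 0 < constantCoeff U)
    (n : ℕ) : coeff n (((1 - X)⁻¹) ^ 2 * U) < coeff (n + 1) (((1 - X)⁻¹) ^ 2 * U) := by
  have hdiff : coeff (n + 1) (((1 - X)⁻¹) ^ 2 * U) - coeff n (((1 - X)⁻¹) ^ 2 * U) =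
      coeff (n + 1) ((1 - X)⁻¹ * U) := by
    have h : (1 - X) * (((1 - X : K⟦X⟧)⁻¹) ^ 2 * U) = (1 - X)⁻¹ * U := by
      rw [sq, ← mul_assoc, ← mul_assoc, PowerSeries.mul_inv_cancel _ (by simp), one_mul]
    rw [← h, sub_mul, one_mul, map_sub, coeff_succ_X_mul]
  have hgeom : coeff (n + 1) (1 - X : K⟦X⟧)⁻¹ = 1 := by
    simpa using coeff_inv_one_sub_X_pow (K := K) one_pos (n + 1)
  have hpos : constantCoeff U ≤ coeff (n + 1) ((1 - X)⁻¹ * U) := by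
    have hgeom_nonneg : (1 - X : K⟦X⟧)⁻¹ ∈ nonnegCoeffs K := by
      simpa using inv_one_sub_X_pow_mem_nonnegCoeffs (K := K) one_pos
    simpa [hgeom] using coeff_mul_coeff_le_coeff_mul hgeom_nonneg hU (n + 1) 0
  linarith

theorem W_eq_coeff_wProd {e : ℤ} (he : e ≤ 0) (g : ℕ) :
    W e g = coeff g (wProd ℚ (-e).toNat ((24 - e) / 2).toNat g) := by
  have hpow : ∀ f : ℚ⟦X⟧, zp f (-e) = f ^ (-e).toNat := fun f => if_pos (by omega)
  have hinv : ∀ f : ℚ⟦X⟧, zp f (-((24 - e) / 2)) = f⁻¹ ^ ((24 - e) / 2).toNat := fun f => by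
    rw [zp, if_neg (by omega), neg_neg]
  simp only [W, hpow, hinv, wProd, wFactor, prod_mul_distrib]

theorem stmt1 (e : ℤ) (he : Even e) (hneg : e < 0) :
    W e 1 = (-e : ℚ) ∧ ∀ g : ℕ, 1 ≤ g → W e g < W e (g + 1) := by
  have ha : 2 ≤ (-e).toNat := by rcases he with ⟨k, rfl⟩; omega
  have hb : 2 ≤ ((24 - e) / 2).toNat := by omega
  refine ⟨?_, fun g hg => ?_⟩
  · rw [W_eq_coeff_wProd hneg.le, wProd, Icc_self, prod_singleton, coeff_one_wFactor_one]
    exact_mod_cast Int.toNat_of_nonneg (by omega)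
  · rw [W_eq_coeff_wProd hneg.le, W_eq_coeff_wProd hneg.le, ← coeff_wProd_succ,
      wProd_eq ha hb (by omega)]
    have hIcc : ∀ r ∈ Icc 2 (g + 1), 0 < r := fun r hr => by simp only [mem_Icc] at hr; omega
    refine coeff_lt_coeff_succ_of_mem_nonnegCoeffs (K := ℚ) (mul_mem ?_ (prod_mem ?_)) ?_ g
    · exact wFactor_mem_nonnegCoeffs _ _ one_pos
    · exact fun r hr => wFactor_mem_nonnegCoeffs _ _ (hIcc r hr)
    · rw [map_mul, map_prod, constantCoeff_wFactor _ _ one_pos,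
        prod_eq_one fun r hr => constantCoeff_wFactor _ _ (hIcc r hr), mul_one]
      exact one_pos
end

section
/- The Gauss identity: $\prod_{n \ge 1} \frac{(1-q^n)^2}{1-q^{2n}} = 1 + 2\sum_{n \ge 1}(-1)^n q^{n^2}$ as an identity of formal power series. -/
open PowerSeries Finset

/-- The series `1 + 2 ∑_{n ≥ 1} (-1)^n q^{n^2}`. -/
noncomputable def gaussSeries : PowerSeries ℚ :=
  PowerSeries.mk fun g =>
    if g = 0 then 1
    else if Nat.sqrt g * Nat.sqrt g = g then 2 * (-1 : ℚ) ^ Nat.sqrt g else 0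

/-!
Truncating at degree `g`, the left side has the same coefficient of `q^g` as
`(q;q)_{2g}^2 / (q^2;q^2)_g = (q;q^2)_g^2 (q^2;q^2)_g`. Cauchy's `q`-binomial theorem in base `q^2`
gives Gauss's finite identity `(q;q^2)_n^2 = ∑_{k=0}^{2n} (-1)^(n+k) [2n, k]_{q^2} q^{(n-k)^2}`.
Since `[2g, k]_{q^2} (q^2;q^2)_g ≡ 1` modulo `q^{2 min(k, 2g-k) + 2}`, the `k`-th term contributes
to the coefficient of `q^g` only through its leading monomial `q^{(g-k)^2}`, which picks out the
squares `g = (g-k)^2`.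
-/

section QBinomial

variable {R : Type*} [CommRing R]

def qBinom (q : R) : ℕ → ℕ → R
  | _, 0 => 1
  | 0, _ + 1 => 0
  | m + 1, k + 1 => qBinom q m k + q ^ (k + 1) * qBinom q m (k + 1)

/-- The `q`-Pochhammer symbol `(q; q)_n`. -/
def qPochhammer (q : R) (n : ℕ) : R := ∏ i ∈ range n, (1 - q ^ (i + 1))

variable (q : R)

@[simp]
theorem qBinom_zero_right (m : ℕ) : qBinom q m 0 = 1 := by
  cases m <;> rfl

theorem qBinom_succ_succ (m k : ℕ) :
    qBinom q (m + 1) (k + 1) = qBinom q m k + q ^ (k + 1) * qBinom q m (k + 1) := rfl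

theorem qBinom_eq_zero_of_lt {m k : ℕ} (h : m < k) : qBinom q m k = 0 := by
  induction m generalizing k with
  | zero => obtain ⟨k, rfl⟩ := Nat.exists_eq_succ_of_ne_zero h.ne'; rfl
  | succ m ih =>
    obtain ⟨k, rfl⟩ := Nat.exists_eq_succ_of_ne_zero (Nat.ne_zero_of_lt h)
    rw [qBinom_succ_succ, ih (by omega), ih (by omega), mul_zero, add_zero]

@[simp]
theorem qBinom_self (m : ℕ) : qBinom q m m = 1 := by
  induction m with
  | zero => rfl
  | succ m ih =>
    rw [qBinom_succ_succ, ih, qBinom_eq_zero_of_lt q m.lt_succ_self, mul_zero, add_zero]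

@[simp]
theorem qPochhammer_zero : qPochhammer q 0 = 1 := prod_range_zero _

theorem qPochhammer_succ (n : ℕ) :
    qPochhammer q (n + 1) = qPochhammer q n * (1 - q ^ (n + 1)) := prod_range_succ _ _

theorem qBinom_mul_qPochhammer_mul_qPochhammer {m k : ℕ} (hk : k ≤ m) :
    qBinom q m k * qPochhammer q k * qPochhammer q (m - k) = qPochhammer q m := by
  induction m generalizing k with
  | zero => obtain rfl := Nat.le_zero.mp hk; simp
  | succ m ih =>
    rcases k with _ | k
    · simp
    rcases hk.lt_or_eq with hk | hk
    · obtain ⟨j, hj⟩ : ∃ j, m - k = j + 1 := ⟨m - k - 1, by omega⟩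
      have h₁ := ih (k := k) (by omega)
      have h₂ := ih (k := k + 1) (by omega)
      rw [hj, qPochhammer_succ] at h₁
      rw [show m - (k + 1) = j by omega, qPochhammer_succ] at h₂
      have hpow : q ^ (m + 1) = q ^ (k + 1) * q ^ (j + 1) := by rw [← pow_add]; congr 1; omega
      rw [show m + 1 - (k + 1) = j + 1 by omega, qBinom_succ_succ, qPochhammer_succ q m,
        qPochhammer_succ q k, qPochhammer_succ q j, hpow]
      linear_combination (1 - q ^ (k + 1)) * h₁ + q ^ (k + 1) * (1 - q ^ (j + 1)) * h₂
    · obtain rfl : k = m := by omega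
      simp

theorem prod_add_mul_pow_eq_sum_qBinom (m : ℕ) (w z : R) :
    ∏ i ∈ range m, (w + z * q ^ i) =
      ∑ k ∈ range (m + 1), q ^ k.choose 2 * qBinom q m k * z ^ k * w ^ (m - k) := by
  induction m generalizing z with
  | zero => simp
  | succ m ih =>
    set a : ℕ → R := fun k ↦ q ^ k.choose 2 * qBinom q m k * (z * q) ^ k * w ^ (m - k)
    have ha : a (m + 1) = 0 := by simp [a, qBinom_eq_zero_of_lt q m.lt_succ_self]
    have hterm : ∀ k ∈ range (m + 1),
        q ^ (k + 1).choose 2 * qBinom q (m + 1) (k + 1) * z ^ (k + 1) * w ^ (m + 1 - (k + 1)) =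
          z * a k + w * a (k + 1) := by
      intro k hk
      have hchoose : (k + 1).choose 2 = k.choose 2 + k := by
        rw [Nat.choose_succ_succ', Nat.choose_one_right, add_comm]
      rcases (Nat.lt_succ_iff.mp (mem_range.mp hk)).lt_or_eq with hk | rfl
      · obtain ⟨j, hj⟩ : ∃ j, m - k = j + 1 := ⟨m - k - 1, by omega⟩
        simp only [a, qBinom_succ_succ, hchoose, Nat.add_sub_add_right, hj,
          show m - (k + 1) = j by omega]
        ring
      · simp only [a, qBinom_succ_succ, hchoose, qBinom_eq_zero_of_lt q (Nat.lt_succ_self _),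
          Nat.sub_self]
        ring
    calc ∏ i ∈ range (m + 1), (w + z * q ^ i)
        = (∏ i ∈ range m, (w + z * q * q ^ i)) * (w + z) := by
          simp only [prod_range_succ', pow_succ, pow_zero, mul_one, mul_assoc, mul_comm q]
      _ = z * ∑ k ∈ range (m + 1), a k + w * (∑ k ∈ range (m + 1), a (k + 1) + a 0) := by
          rw [ih, ← sum_range_succ', sum_range_succ _ (m + 1), ha, add_zero]
          ring
      _ = ∑ k ∈ range (m + 1), (z * a k + w * a (k + 1)) + w * a 0 := by
          rw [sum_add_distrib, ← mul_sum, ← mul_sum]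
          ring
      _ = _ := by
          rw [sum_range_succ' _ (m + 1), ← sum_congr rfl hterm]
          simp [a, pow_succ']

theorem qPochhammer_sub_qPochhammer_dvd {a b : ℕ} (hab : a ≤ b) :
    q ^ (a + 1) ∣ qPochhammer q b - qPochhammer q a := by
  induction b, hab using Nat.le_induction with
  | base => simp
  | succ b hab ih =>
    rw [qPochhammer_succ, show qPochhammer q b * (1 - q ^ (b + 1)) - qPochhammer q a =
      (qPochhammer q b - qPochhammer q a) - q ^ (b + 1) * qPochhammer q b by ring]
    exact dvd_sub ih ((pow_dvd_pow q (by omega)).mul_right _)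

theorem qPochhammer_two_mul (n : ℕ) :
    qPochhammer q (2 * n) = (∏ j ∈ range n, (1 - q ^ (2 * j + 1))) * qPochhammer (q ^ 2) n := by
  induction n with
  | zero => simp
  | succ n ih =>
    rw [show 2 * (n + 1) = 2 * n + 1 + 1 by ring, qPochhammer_succ, qPochhammer_succ, ih,
      prod_range_succ, qPochhammer_succ, ← pow_mul]
    ring

theorem qBinom_mul_qPochhammer_sub_one_dvd {m k b : ℕ} (hk : k ≤ m) (hb : min k (m - k) ≤ b)
    (hu : IsUnit (qPochhammer q (min k (m - k)))) :
    q ^ (min k (m - k) + 1) ∣ qBinom q m k * qPochhammer q b - 1 := by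
  set a := min k (m - k)
  let π := Ideal.Quotient.mk (Ideal.span {q ^ (a + 1)})
  have hπ : ∀ c, a ≤ c → π (qPochhammer q c) = π (qPochhammer q a) := fun c hc ↦
    Ideal.Quotient.eq.mpr (Ideal.mem_span_singleton.mpr (qPochhammer_sub_qPochhammer_dvd q hc))
  obtain ⟨u, hu⟩ := hu.map π
  have h := congrArg π (qBinom_mul_qPochhammer_mul_qPochhammer q hk)
  rw [map_mul, map_mul, hπ k (min_le_left _ _), hπ (m - k) (min_le_right _ _),
    hπ m (by omega), ← hu] at h
  have hinv : π (qBinom q m k) * u = 1 := (Units.mul_left_inj u).mp (by rw [h, one_mul])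
  rw [← Ideal.mem_span_singleton, ← Ideal.Quotient.eq_zero_iff_mem, map_sub, map_mul,
    hπ b hb, ← hu, hinv, map_one, sub_self]

end QBinomial

section FiniteGauss

variable {R : Type*} [CommRing R]

theorem prod_range_two_mul_pow_sub_pow_odd (x : R) (n : ℕ) :
    ∏ i ∈ range (2 * n), (x ^ (2 * n) - x ^ (2 * i + 1)) =
      (-1) ^ n * x ^ (3 * n ^ 2) * (∏ j ∈ range n, (1 - x ^ (2 * j + 1))) ^ 2 := by
  set A := ∏ j ∈ range n, (1 - x ^ (2 * j + 1))
  have hodd : ∑ i ∈ range n, (2 * i + 1) = n ^ 2 := by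
    induction n with
    | zero => rfl
    | succ n ih => rw [sum_range_succ, ih]; ring
  have hlow : ∏ i ∈ range n, (x ^ (2 * n) - x ^ (2 * i + 1)) = (-1) ^ n * x ^ (n ^ 2) * A := by
    have hfactor : ∀ i ∈ range n,
        x ^ (2 * n) - x ^ (2 * i + 1) = -x ^ (2 * i + 1) * (1 - x ^ (2 * (n - 1 - i) + 1)) := by
      intro i hi
      rw [neg_mul, mul_sub, ← pow_add, show 2 * i + 1 + (2 * (n - 1 - i) + 1) = 2 * n by
        have := mem_range.mp hi; omega]
      ring
    rw [prod_congr rfl hfactor, prod_mul_distrib, prod_neg, card_range, prod_pow_eq_pow_sum, hodd,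
      prod_range_reflect (fun j ↦ 1 - x ^ (2 * j + 1))]
  have hup : ∏ j ∈ range n, (x ^ (2 * n) - x ^ (2 * (n + j) + 1)) = x ^ (2 * n * n) * A := by
    rw [prod_congr rfl fun j _ ↦ show x ^ (2 * n) - x ^ (2 * (n + j) + 1) =
      x ^ (2 * n) * (1 - x ^ (2 * j + 1)) by ring, prod_mul_distrib, prod_const, card_range,
      ← pow_mul]
  rw [two_mul n, prod_range_add, ← two_mul, hlow, hup]
  ring

theorem sum_neg_one_pow_mul_qBinom_mul_pow_dist_sq [IsDomain R] {x : R} (hx : x ≠ 0) (n : ℕ) :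
    ∑ k ∈ range (2 * n + 1), (-1) ^ k * qBinom (x ^ 2) (2 * n) k * x ^ (n.dist k ^ 2) =
      (-1) ^ n * (∏ j ∈ range n, (1 - x ^ (2 * j + 1))) ^ 2 := by
  have hchoose : ∀ k, 2 * k.choose 2 + k = k ^ 2 := by
    intro k
    induction k with
    | zero => rfl
    | succ k ih =>
      rw [Nat.choose_succ_succ', Nat.choose_one_right]
      linear_combination ih
  have hexp : ∀ k ≤ 2 * n,
      2 * k.choose 2 + k + 2 * n * (2 * n - k) = 3 * n ^ 2 + n.dist k ^ 2 := by
    intro k hk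
    rw [hchoose]
    rcases le_total n k with h | h
    · rw [Nat.dist_eq_sub_of_le h]
      zify [h, hk]
      ring
    · rw [Nat.dist_eq_sub_of_le_right h]
      zify [h, hk]
      ring
  have hcauchy := prod_add_mul_pow_eq_sum_qBinom (x ^ 2) (2 * n) (x ^ (2 * n)) (-x)
  have hterm : ∀ k ∈ range (2 * n + 1),
      (x ^ 2) ^ k.choose 2 * qBinom (x ^ 2) (2 * n) k * (-x) ^ k * (x ^ (2 * n)) ^ (2 * n - k) =
        x ^ (3 * n ^ 2) * ((-1) ^ k * qBinom (x ^ 2) (2 * n) k * x ^ (n.dist k ^ 2)) := by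
    intro k hk
    calc _ = (-1) ^ k * qBinom (x ^ 2) (2 * n) k *
          x ^ (2 * k.choose 2 + k + 2 * n * (2 * n - k)) := by ring
      _ = _ := by
          rw [hexp k (by have := mem_range.mp hk; omega), pow_add]
          ring
  have hprod : ∏ i ∈ range (2 * n), (x ^ (2 * n) + -x * (x ^ 2) ^ i) =
      ∏ i ∈ range (2 * n), (x ^ (2 * n) - x ^ (2 * i + 1)) := prod_congr rfl fun i _ ↦ by ring
  rw [hprod, prod_range_two_mul_pow_sub_pow_odd, sum_congr rfl hterm, ← mul_sum] at hcauchy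
  refine mul_left_cancel₀ (pow_ne_zero (3 * n ^ 2) hx) ?_
  rw [← hcauchy]
  ring

theorem qPochhammer_two_mul_sq_mul_eq_sum [IsDomain R] {x : R} (hx : x ≠ 0) (n : ℕ) {y : R}
    (hy : qPochhammer (x ^ 2) n * y = 1) :
    qPochhammer x (2 * n) ^ 2 * y = ∑ k ∈ range (2 * n + 1), (-1) ^ (n + k) *
      (x ^ (n.dist k ^ 2) * (qBinom (x ^ 2) (2 * n) k * qPochhammer (x ^ 2) n)) := by
  have hgauss := congrArg ((-1) ^ n * · * qPochhammer (x ^ 2) n)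
    (sum_neg_one_pow_mul_qBinom_mul_pow_dist_sq hx n)
  simp only [← mul_assoc, ← pow_add, Even.neg_one_pow ⟨n, rfl⟩, one_mul, sum_mul, mul_sum]
    at hgauss
  calc qPochhammer x (2 * n) ^ 2 * y
      = (∏ j ∈ range n, (1 - x ^ (2 * j + 1))) ^ 2 * qPochhammer (x ^ 2) n *
          (qPochhammer (x ^ 2) n * y) := by rw [qPochhammer_two_mul]; ring
    _ = _ := by
        rw [hy, mul_one, ← hgauss]
        exact sum_congr rfl fun k _ ↦ by ring

end FiniteGauss

section PowerSeriesCoeff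

variable {R : Type*} [CommRing R]

theorem PowerSeries.coeff_eq_of_X_pow_dvd_sub {n : ℕ} {f g : R⟦X⟧}
    (h : X ^ (n + 1) ∣ f - g) : coeff n f = coeff n g := by
  rw [← sub_eq_zero, ← map_sub]
  exact X_pow_dvd_iff.mp h n n.lt_succ_self

theorem coeff_qPochhammer_X_pow_mul_of_le {g N : ℕ} (hN : g ≤ N) (r : ℕ) (f : R⟦X⟧) :
    coeff g (qPochhammer X N ^ r * f) = coeff g (qPochhammer X g ^ r * f) := by
  refine coeff_eq_of_X_pow_dvd_sub ?_
  rw [← sub_mul]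
  exact ((qPochhammer_sub_qPochhammer_dvd X hN).trans (sub_dvd_pow_sub_pow _ _ r)).mul_right f

theorem isUnit_qPochhammer_of_constantCoeff_eq_zero {q : R⟦X⟧} (hq : constantCoeff q = 0)
    (n : ℕ) : IsUnit (qPochhammer q n) := by
  simp [isUnit_iff_constantCoeff, qPochhammer, hq]

theorem qPochhammer_mul_prod_inv {K : Type*} [Field K] {q : K⟦X⟧} (hq : constantCoeff q = 0)
    (n : ℕ) : qPochhammer q n * ∏ i ∈ range n, (1 - q ^ (i + 1))⁻¹ = 1 := by
  rw [qPochhammer, ← prod_mul_distrib]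
  exact prod_eq_one fun i _ ↦ PowerSeries.mul_inv_cancel _ (by simp [hq])

theorem coeff_X_pow_dist_sq_mul_qBinom_mul_qPochhammer {g k : ℕ} (hk : k ≤ 2 * g) :
    coeff g ((X : R⟦X⟧) ^ (g.dist k ^ 2) * (qBinom (X ^ 2) (2 * g) k * qPochhammer (X ^ 2) g)) =
      if g.dist k ^ 2 = g then 1 else 0 := by
  set d := g.dist k
  have hdg : d ≤ g := by simp only [d, Nat.dist]; omega
  have hmin : min k (2 * g - k) = g - d := by simp only [d, Nat.dist]; omega
  obtain ⟨h, hh⟩ :=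
    qBinom_mul_qPochhammer_sub_one_dvd ((X : R⟦X⟧) ^ 2) hk (b := g) (by omega)
    (isUnit_qPochhammer_of_constantCoeff_eq_zero (by simp) _)
  have hlt : g < d ^ 2 + 2 * (g - d + 1) := by
    zify [hdg]
    nlinarith [sq_nonneg ((d : ℤ) - 1)]
  rw [sub_eq_iff_eq_add'.mp hh, hmin, mul_add, mul_one, ← mul_assoc, ← pow_mul, ← pow_add,
    map_add, coeff_X_pow_mul', if_neg (by omega), add_zero, coeff_X_pow]
  simp only [eq_comm]

theorem PowerSeries.coeff_neg_one_pow_mul (n j : ℕ) (f : R⟦X⟧) :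
    coeff n ((-1) ^ j * f) = (-1) ^ j * coeff n f := by
  rw [show ((-1) ^ j : R⟦X⟧) = PowerSeries.C ((-1) ^ j) by simp, coeff_C_mul]

end PowerSeriesCoeff

theorem Nat.dist_sq_eq_self_iff {g k : ℕ} :
    g.dist k ^ 2 = g ↔ g.sqrt * g.sqrt = g ∧ (k = g - g.sqrt ∨ k = g + g.sqrt) := by
  have hs := Nat.sqrt_le_self g
  constructor
  · intro h
    have hd : g.sqrt = g.dist k := by nth_rewrite 1 [← h]; exact Nat.sqrt_eq' _
    refine ⟨by rw [hd, ← sq, h], ?_⟩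
    rw [hd]
    unfold Nat.dist at hd ⊢
    omega
  · rintro ⟨hsq, hk⟩
    have hd : g.dist k = g.sqrt := by unfold Nat.dist; omega
    rw [hd, sq, hsq]

theorem coeff_gaussSeries (g : ℕ) :
    coeff g gaussSeries =
      ∑ k ∈ range (2 * g + 1), (-1) ^ (g + k) * if g.dist k ^ 2 = g then 1 else 0 := by
  simp only [mul_ite, mul_one, mul_zero]
  rw [← sum_filter, gaussSeries, coeff_mk]
  split_ifs with h0 hsq
  · subst h0
    simp [filter_singleton]
  · have hs : 0 < g.sqrt := Nat.sqrt_pos.mpr (Nat.pos_of_ne_zero h0)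
    have hsg := Nat.sqrt_le_self g
    have hfilter : {k ∈ range (2 * g + 1) | g.dist k ^ 2 = g} = {g - g.sqrt, g + g.sqrt} := by
      ext k
      simp only [mem_filter, mem_range, Nat.dist_sq_eq_self_iff, hsq, true_and, mem_insert,
        mem_singleton]
      omega
    rw [hfilter, sum_pair (by omega), show g + (g - g.sqrt) = 2 * (g - g.sqrt) + g.sqrt by omega,
      show g + (g + g.sqrt) = 2 * g + g.sqrt by ring, pow_add, pow_add, pow_mul, pow_mul]
    simp only [neg_one_sq, one_pow, one_mul]
    ring
  · refine (sum_eq_zero fun k hk ↦ ?_).symm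
    exact absurd (Nat.dist_sq_eq_self_iff.mp (mem_filter.mp hk).2).1 hsq

theorem Finset.prod_Icc_one_eq_prod_range {M : Type*} [CommMonoid M] (f : ℕ → M) (n : ℕ) :
    ∏ i ∈ Icc 1 n, f i = ∏ i ∈ range n, f (i + 1) := by
  rw [range_eq_Ico, prod_Ico_add', zero_add, Ico_add_one_right_eq_Icc]

theorem stmt4 (g : ℕ) :
    PowerSeries.coeff (R := ℚ) g
      (∏ n ∈ Icc 1 g,
        ((1 - PowerSeries.X ^ n) ^ 2 * (1 - PowerSeries.X ^ (2 * n))⁻¹)) =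
    PowerSeries.coeff (R := ℚ) g gaussSeries := by
  set I : ℚ⟦X⟧ := ∏ n ∈ Icc 1 g, (1 - X ^ (2 * n))⁻¹
  have hI : qPochhammer (X ^ 2 : ℚ⟦X⟧) g * I = 1 := by
    simpa only [I, prod_Icc_one_eq_prod_range, pow_mul] using
      qPochhammer_mul_prod_inv (q := (X : ℚ⟦X⟧) ^ 2) (by simp) g
  have hlhs : ∏ n ∈ Icc 1 g, ((1 - X ^ n) ^ 2 * (1 - X ^ (2 * n))⁻¹) =
      qPochhammer (X : ℚ⟦X⟧) g ^ 2 * I := by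
    rw [prod_mul_distrib, prod_pow, prod_Icc_one_eq_prod_range]
    rfl
  rw [hlhs, ← coeff_qPochhammer_X_pow_mul_of_le (by omega : g ≤ 2 * g),
    qPochhammer_two_mul_sq_mul_eq_sum X_ne_zero g hI, map_sum, coeff_gaussSeries]
  refine sum_congr rfl fun k hk ↦ ?_
  rw [coeff_neg_one_pow_mul, coeff_X_pow_dist_sq_mul_qBinom_mul_qPochhammer (by
    have := mem_range.mp hk; omega)]
end

section
/- For any even integer $e$, the coefficients $w_g$ of $\prod_{r \ge 1}(1+q^r)^{-e} \cdot \prod_{s \ge 1}(1-q^{2s})^{-(24-e)/2}$ and the coefficients $c_g$ of $\prod_{s \ge 1}(1-q^s)^{-24}$ satisfy $w_g \equiv c_g \pmod 2$ for all $g \ge 0$. -/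
open PowerSeries Finset

/-!
All factors are units of `ℤ⟦X⟧`, so both series have integer coefficients and it suffices to
compare their reductions in `𝔽₂⟦X⟧`. There `1 + q^r = 1 - q^r` and `1 - q^{2s} = (1 - q^s)^2`,
so `w` becomes `∏ (1 - q^s)^{-e - 2·(24-e)/2}`, which is `∏ (1 - q^s)^{-24}` because `e` is even.
-/

open scoped PowerSeries

variable {R S : Type*} [CommRing R] [CommRing S]

namespace PowerSeries

instance charP (p : ℕ) [CharP R p] : CharP R⟦X⟧ p :=
  charP_of_injective_ringHom (C_injective (R := R)) p

theorem val_inv_units {k : Type*} [Field k] (u : k⟦X⟧ˣ) :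
    ((u⁻¹ : k⟦X⟧ˣ) : k⟦X⟧) = (u : k⟦X⟧)⁻¹ :=
  ((inv_eq_iff_mul_eq_one (isUnit_iff_constantCoeff.1 u.isUnit).ne_zero).2 u.inv_mul).symm

theorem isUnit_one_add_X_pow {n : ℕ} (hn : n ≠ 0) : IsUnit (1 + X ^ n : R⟦X⟧) := by
  simp [isUnit_iff_constantCoeff, hn]

theorem isUnit_one_sub_X_pow {n : ℕ} (hn : n ≠ 0) : IsUnit (1 - X ^ n : R⟦X⟧) := by
  simp [isUnit_iff_constantCoeff, hn]

/-- Junk value `1` at `n = 0`. -/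
noncomputable def oneAddXPowUnit (n : ℕ) : R⟦X⟧ˣ :=
  if hn : n = 0 then 1 else (isUnit_one_add_X_pow hn).unit

/-- Junk value `1` at `n = 0`. -/
noncomputable def oneSubXPowUnit (n : ℕ) : R⟦X⟧ˣ :=
  if hn : n = 0 then 1 else (isUnit_one_sub_X_pow hn).unit

theorem val_oneAddXPowUnit {n : ℕ} (hn : n ≠ 0) :
    ((oneAddXPowUnit n : R⟦X⟧ˣ) : R⟦X⟧) = 1 + X ^ n := by
  simp [oneAddXPowUnit, hn]

theorem val_oneSubXPowUnit {n : ℕ} (hn : n ≠ 0) :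
    ((oneSubXPowUnit n : R⟦X⟧ˣ) : R⟦X⟧) = 1 - X ^ n := by
  simp [oneSubXPowUnit, hn]

theorem map_oneAddXPowUnit (f : R →+* S) (n : ℕ) :
    Units.map (map f).toMonoidHom (oneAddXPowUnit n) = oneAddXPowUnit n := by
  rcases eq_or_ne n 0 with rfl | hn
  · simp [oneAddXPowUnit]
  · ext1; simp [val_oneAddXPowUnit hn]

theorem map_oneSubXPowUnit (f : R →+* S) (n : ℕ) :
    Units.map (map f).toMonoidHom (oneSubXPowUnit n) = oneSubXPowUnit n := by
  rcases eq_or_ne n 0 with rfl | hn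
  · simp [oneSubXPowUnit]
  · ext1; simp [val_oneSubXPowUnit hn]

section CharTwo

variable [CharP R 2]

theorem oneAddXPowUnit_eq_oneSubXPowUnit (n : ℕ) :
    (oneAddXPowUnit n : R⟦X⟧ˣ) = oneSubXPowUnit n := by
  rcases eq_or_ne n 0 with rfl | hn
  · simp [oneAddXPowUnit, oneSubXPowUnit]
  · ext1; simp [val_oneAddXPowUnit hn, val_oneSubXPowUnit hn, CharTwo.sub_eq_add]

theorem oneSubXPowUnit_two_mul (n : ℕ) :
    (oneSubXPowUnit (2 * n) : R⟦X⟧ˣ) = oneSubXPowUnit n ^ 2 := by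
  rcases eq_or_ne n 0 with rfl | hn
  · simp [oneSubXPowUnit]
  · ext1
    simp [val_oneSubXPowUnit hn, val_oneSubXPowUnit (mul_ne_zero two_ne_zero hn),
      CharTwo.sub_eq_add, CharTwo.add_sq, pow_mul']

end CharTwo

end PowerSeries

theorem zp_val_units (u : ℚ⟦X⟧ˣ) (n : ℤ) : zp u n = ↑(u ^ n) := by
  unfold zp
  split_ifs with hn
  · rw [← Int.toNat_of_nonneg hn, zpow_natCast, Units.val_pow_eq_pow_val, Int.toNat_natCast]
  · rw [← val_inv_units, ← Units.val_pow_eq_pow_val, ← zpow_natCast,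
      Int.toNat_of_nonneg (by omega), inv_zpow', neg_neg]

noncomputable def wUnit (e : ℤ) (g : ℕ) : R⟦X⟧ˣ :=
  (∏ r ∈ Icc 1 g, oneAddXPowUnit r ^ (-e)) *
    ∏ s ∈ Icc 1 g, oneSubXPowUnit (2 * s) ^ (-((24 - e) / 2))

noncomputable def cUnit (g : ℕ) : R⟦X⟧ˣ :=
  ∏ s ∈ Icc 1 g, oneSubXPowUnit s ^ (-24 : ℤ)

theorem map_wUnit (f : R →+* S) (e : ℤ) (g : ℕ) :
    Units.map (map f).toMonoidHom (wUnit e g) = wUnit e g := by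
  simp only [wUnit, map_mul, map_prod, map_zpow, map_oneAddXPowUnit, map_oneSubXPowUnit]

theorem map_cUnit (f : R →+* S) (g : ℕ) :
    Units.map (map f).toMonoidHom (cUnit g) = cUnit g := by
  simp only [cUnit, map_prod, map_zpow, map_oneSubXPowUnit]

theorem wUnit_eq_cUnit [CharP R 2] {e : ℤ} (he : Even e) (g : ℕ) :
    (wUnit e g : R⟦X⟧ˣ) = cUnit g := by
  rw [wUnit, cUnit, ← prod_mul_distrib]
  refine prod_congr rfl fun s _ ↦ ?_
  obtain ⟨m, rfl⟩ := he
  rw [oneAddXPowUnit_eq_oneSubXPowUnit, oneSubXPowUnit_two_mul, ← zpow_natCast, ← zpow_mul,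
    ← zpow_add]
  congr 1
  omega

theorem W_eq_coeff_wUnit (e : ℤ) (g : ℕ) : W e g = coeff g (wUnit e g : ℚ⟦X⟧ˣ) := by
  rw [W, wUnit, Units.val_mul, Units.coe_prod, Units.coe_prod]
  congr 2 <;> refine prod_congr rfl fun r hr ↦ ?_
  · rw [← val_oneAddXPowUnit (by grind), zp_val_units]
  · rw [← val_oneSubXPowUnit (by grind), zp_val_units]

theorem C_eq_coeff_cUnit (g : ℕ) : _root_.C g = coeff g (cUnit g : ℚ⟦X⟧ˣ) := by
  rw [_root_.C, cUnit, Units.coe_prod]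
  refine congrArg _ (prod_congr rfl fun s hs ↦ ?_)
  rw [← val_oneSubXPowUnit (by grind), ← val_inv_units, ← Units.val_pow_eq_pow_val, inv_pow,
    ← zpow_natCast, ← zpow_neg]
  rfl

theorem two_dvd_coeff_sub_of_map_eq {f g : ℤ⟦X⟧}
    (h : map (Int.castRingHom (ZMod 2)) f = map (Int.castRingHom (ZMod 2)) g) (n : ℕ) :
    2 ∣ coeff n f - coeff n g := by
  have := congrArg (coeff n) h
  simp only [coeff_map, eq_intCast] at this
  exact (ZMod.intCast_eq_intCast_iff_dvd_sub _ _ 2).1 this.symm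

theorem stmt6 (e : ℤ) (he : Even e) (g : ℕ) :
    ∃ k : ℤ, W e g - _root_.C g = 2 * k := by
  have hmod := congrArg Units.val (wUnit_eq_cUnit (R := ZMod 2) he g)
  rw [← map_wUnit (Int.castRingHom (ZMod 2)), ← map_cUnit (Int.castRingHom (ZMod 2))] at hmod
  obtain ⟨k, hk⟩ := two_dvd_coeff_sub_of_map_eq hmod g
  refine ⟨k, ?_⟩
  rw [W_eq_coeff_wUnit, C_eq_coeff_cUnit, ← map_wUnit (Int.castRingHom ℚ),
    ← map_cUnit (Int.castRingHom ℚ)]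
  simp only [Units.coe_map, RingHom.toMonoidHom_eq_coe, MonoidHom.coe_coe, coeff_map, eq_intCast]
  exact_mod_cast hk
end

section
/- If two sequences of positive reals satisfy $\log a_n \sim (an)^\alpha$ and $\log b_n \sim (bn)^\alpha$ for constants $a, b > 0$ and $0 < \alpha < 1$, then the coefficients $p_n = \sum_{k=0}^n a_k b_{n-k}$ of the product series satisfy $\log p_n \sim (cn)^\alpha$ where $c = (a^{\alpha/(1-\alpha)} + b^{\alpha/(1-\alpha)})^{(1-\alpha)/\alpha}$. -/
open Filter Real Topology Finset Asymptotics

/-!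
Hölder's inequality with exponents `1/(1-α)` and `1/α` gives
`(a x)^α + (b y)^α ≤ (c (x + y))^α` for `x, y ≥ 0`, with equality when `x : y = a^β : b^β`,
`β = α/(1-α)`. Since `log a_k ≤ (1+ε)(a k)^α + O(1)` and likewise for `b`, every term of `p_n`
is at most `exp((1+ε)(c n)^α + O(1))`, and there are only `n + 1` of them. Conversely the single
term with `k = ⌊t n⌋`, `t = a^β/(a^β + b^β)`, already has logarithm `~ (c n)^α`.
-/

noncomputable def convConst (α a b : ℝ) : ℝ :=
  (a ^ (α / (1 - α)) + b ^ (α / (1 - α))) ^ ((1 - α) / α)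

section ConvConst

variable {α a b : ℝ}

theorem convConst_rpow (hα : α ≠ 0) (ha : 0 ≤ a) (hb : 0 ≤ b) :
    convConst α a b ^ α = (a ^ (α / (1 - α)) + b ^ (α / (1 - α))) ^ (1 - α) := by
  rw [convConst, ← rpow_mul (by positivity), div_mul_cancel₀ _ hα]

theorem convConst_nonneg (ha : 0 ≤ a) (hb : 0 ≤ b) : 0 ≤ convConst α a b := by
  unfold convConst; positivity

theorem convConst_pos (ha : 0 < a) (hb : 0 < b) : 0 < convConst α a b := by
  unfold convConst; positivity

theorem rpow_add_rpow_le_convConst_mul (hα0 : 0 < α) (hα1 : α < 1) (ha : 0 ≤ a) (hb : 0 ≤ b)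
    {x y : ℝ} (hx : 0 ≤ x) (hy : 0 ≤ y) :
    (a * x) ^ α + (b * y) ^ α ≤ (convConst α a b * (x + y)) ^ α := by
  have hpq : (1 / (1 - α)).HolderConjugate (1 / α) := by
    rw [one_div, one_div, Real.holderConjugate_iff]
    refine ⟨?_, by simp⟩
    rw [lt_inv_comm₀ one_pos (by linarith)]
    linarith
  have holder := inner_le_Lp_mul_Lq_of_nonneg univ hpq (f := ![a ^ α, b ^ α])
    (g := ![x ^ α, y ^ α]) (by simp [Fin.forall_fin_two]; exact ⟨by positivity, by positivity⟩)
    (by simp [Fin.forall_fin_two]; exact ⟨by positivity, by positivity⟩)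
  simp only [Fin.sum_univ_two, Matrix.cons_val_zero, Matrix.cons_val_one, ← rpow_mul ha,
    ← rpow_mul hb, ← rpow_mul hx, ← rpow_mul hy, one_div_one_div, mul_one_div,
    div_self hα0.ne', rpow_one] at holder
  rwa [mul_rpow ha hx, mul_rpow hb hy, mul_rpow (convConst_nonneg ha hb) (by positivity),
    convConst_rpow hα0.ne' ha hb]

theorem exists_rpow_add_rpow_eq_convConst_rpow (hα0 : 0 < α) (hα1 : α < 1) (ha : 0 < a)
    (hb : 0 < b) :
    ∃ t, 0 < t ∧ t < 1 ∧ (a * t) ^ α + (b * (1 - t)) ^ α = convConst α a b ^ α := by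
  set β := α / (1 - α)
  set S := a ^ β + b ^ β
  have hS : 0 < S := by positivity
  have hpart : ∀ x : ℝ, 0 < x → (x * (x ^ β / S)) ^ α = x ^ β / S ^ α := by
    intro x hx
    rw [← mul_div_assoc, ← rpow_one_add' hx.le (by positivity), div_rpow (by positivity) hS.le,
      ← rpow_mul hx.le]
    have h1α : 1 - α ≠ 0 := (sub_pos.2 hα1).ne'
    congr 2
    simp only [β]
    field_simp
    ring
  refine ⟨a ^ β / S, by positivity, ?_, ?_⟩
  · rw [div_lt_one hS]
    linarith [rpow_pos_of_pos hb β]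
  · have hsplit : 1 - a ^ β / S = b ^ β / S := by
      rw [eq_div_iff hS.ne', sub_mul, div_mul_cancel₀ _ hS.ne']
      ring
    rw [hsplit, hpart a ha, hpart b hb, convConst_rpow hα0.ne' ha.le hb.le, ← add_div,
      rpow_sub hS, rpow_one]

end ConvConst

theorem exists_forall_le_add_mul_of_tendsto_div {f g : ℕ → ℝ} (hg : ∀ᶠ n in atTop, 0 < g n)
    (hfg : Tendsto (fun n => f n / g n) atTop (𝓝 1)) {r : ℝ} (hr : 1 < r) :
    ∃ M, ∀ n, f n ≤ M + r * g n := by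
  obtain ⟨N, hN⟩ := eventually_atTop.1 (hg.and (hfg.eventually (eventually_lt_nhds hr)))
  refine ⟨∑ i ∈ range N, |f i - r * g i|, fun n => ?_⟩
  have hM : 0 ≤ ∑ i ∈ range N, |f i - r * g i| := sum_nonneg fun i _ => abs_nonneg _
  rcases lt_or_ge n N with hn | hn
  · have := single_le_sum (f := fun i => |f i - r * g i|) (fun i _ => abs_nonneg _)
      (mem_range.2 hn)
    linarith [le_abs_self (f n - r * g n)]
  · obtain ⟨hgn, hfgn⟩ := hN n hn
    linarith [(div_lt_iff₀ hgn).1 hfgn]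

theorem tendsto_comp_div_rpow_mul {α d e u : ℝ} (hα : 0 ≤ α) (hd : 0 < d) (he : 0 < e)
    (hu : 0 < u) {f : ℕ → ℝ} {m : ℕ → ℕ}
    (hf : Tendsto (fun j : ℕ => f j / (d * j) ^ α) atTop (𝓝 1))
    (hm : Tendsto (fun n : ℕ => (m n : ℝ) / n) atTop (𝓝 u)) :
    Tendsto (fun n : ℕ => f (m n) / (e * n) ^ α) atTop (𝓝 ((d * u / e) ^ α)) := by
  have hm_top : Tendsto m atTop atTop := by
    rw [← tendsto_natCast_atTop_iff (R := ℝ)]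
    refine (hm.pos_mul_atTop hu tendsto_natCast_atTop_atTop).congr' ?_
    filter_upwards [eventually_ne_atTop 0] with n hn
    field_simp
  have hratio : Tendsto (fun n : ℕ => (d * ((m n : ℝ) / n) / e) ^ α) atTop
      (𝓝 ((d * u / e) ^ α)) :=
    ((hm.const_mul d).div_const e).rpow_const (Or.inr hα)
  refine (one_mul ((d * u / e) ^ α) ▸ (hf.comp hm_top).mul hratio).congr' ?_
  filter_upwards [eventually_ne_atTop 0, hm_top.eventually_ne_atTop 0] with n hn hmn
  have hquot : d * ((m n : ℝ) / n) / e = d * m n / (e * n) := by field_simp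
  rw [Function.comp_apply, hquot, div_rpow (by positivity) (by positivity)]
  field_simp

theorem tendsto_log_add_const_div_rpow {α c : ℝ} (hα : 0 < α) (hc : 0 < c) (K : ℝ) :
    Tendsto (fun n : ℕ => (log (n + 1) + K) / (c * n) ^ α) atTop (𝓝 0) := by
  have hD : Tendsto (fun n : ℕ => (c * n) ^ α) atTop atTop :=
    (tendsto_rpow_atTop hα).comp (tendsto_natCast_atTop_atTop.const_mul_atTop hc)
  have hlog : (fun n : ℕ => log ((n : ℝ) + 1)) =o[atTop] fun n => ((n : ℝ) + 1) ^ α :=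
    (isLittleO_log_rpow_atTop hα).comp_tendsto
      (tendsto_atTop_add_const_right _ 1 tendsto_natCast_atTop_atTop)
  have hbig : (fun n : ℕ => ((n : ℝ) + 1) ^ α) =O[atTop] fun n => (c * n) ^ α := by
    refine IsBigO.rpow hα.le (Eventually.of_forall fun n => by positivity) ?_
    refine IsBigO.of_bound (2 / c) ?_
    filter_upwards [eventually_ge_atTop 1] with n hn
    have : (1 : ℝ) ≤ n := by exact_mod_cast hn
    rw [norm_of_nonneg (by positivity), norm_of_nonneg (by positivity)]
    field_simp
    linarith
  have hK : (fun _ : ℕ => K) =o[atTop] fun n => (c * n) ^ α :=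
    isLittleO_const_left.2 (Or.inr (tendsto_norm_atTop_atTop.comp hD))
  exact ((hlog.trans_isBigO hbig).add hK).tendsto_div_nhds_zero

theorem log_sum_le_log_card_add {ι : Type*} {s : Finset ι} (hs : s.Nonempty) {f : ι → ℝ}
    (hf : ∀ i ∈ s, 0 < f i) {L : ℝ} (hL : ∀ i ∈ s, log (f i) ≤ L) :
    log (∑ i ∈ s, f i) ≤ log #s + L := by
  have hbound : ∑ i ∈ s, f i ≤ #s * exp L := by
    simpa using sum_le_card_nsmul s f (exp L) fun i hi =>
      (exp_log (hf i hi)).symm.trans_le (exp_le_exp.2 (hL i hi))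
  calc log (∑ i ∈ s, f i) ≤ log (#s * exp L) := log_le_log (sum_pos hf hs) hbound
    _ = log #s + L := by
      rw [log_mul (by simpa using hs.ne_empty) (exp_ne_zero L), log_exp]

section Convolution

variable {α a b : ℝ} {A B : ℕ → ℝ}

theorem eventually_log_sum_mul_div_lt (hα0 : 0 < α) (hα1 : α < 1) (ha : 0 < a) (hb : 0 < b)
    (hA : ∀ n, 0 < A n) (hB : ∀ n, 0 < B n)
    (hAs : Tendsto (fun n : ℕ => log (A n) / (a * n) ^ α) atTop (𝓝 1))
    (hBs : Tendsto (fun n : ℕ => log (B n) / (b * n) ^ α) atTop (𝓝 1)) {u : ℝ} (hu : 1 < u) :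
    ∀ᶠ n : ℕ in atTop,
      log (∑ k ∈ range (n + 1), A k * B (n - k)) / (convConst α a b * n) ^ α < u := by
  have hc := convConst_pos (α := α) ha hb
  obtain ⟨r, hr1, hru⟩ := exists_between hu
  have hpos : ∀ d : ℝ, 0 < d → ∀ᶠ n : ℕ in atTop, 0 < (d * n) ^ α := fun d hd => by
    filter_upwards [eventually_ne_atTop 0] with n hn
    positivity
  obtain ⟨M, hM⟩ := exists_forall_le_add_mul_of_tendsto_div (hpos a ha) hAs hr1
  obtain ⟨N, hN⟩ := exists_forall_le_add_mul_of_tendsto_div (hpos b hb) hBs hr1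
  have hterm : ∀ n, ∀ k ∈ range (n + 1),
      log (A k * B (n - k)) ≤ M + N + r * (convConst α a b * n) ^ α := by
    intro n k hk
    have hkn : (k : ℝ) + (n - k : ℕ) = n := by
      rw [Nat.cast_sub (Nat.lt_succ_iff.1 (mem_range.1 hk))]
      ring
    have hholder := rpow_add_rpow_le_convConst_mul hα0 hα1 ha.le hb.le (Nat.cast_nonneg k)
      (Nat.cast_nonneg (n - k))
    rw [hkn] at hholder
    rw [log_mul (hA k).ne' (hB _).ne']
    linarith [hM k, hN (n - k), mul_le_mul_of_nonneg_left hholder (by linarith : 0 ≤ r)]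
  filter_upwards [(tendsto_log_add_const_div_rpow hα0 hc (M + N)).eventually
    (eventually_lt_nhds (sub_pos.2 hru)), hpos _ hc] with n hsmall hD
  have hlog := log_sum_le_log_card_add nonempty_range_add_one
    (fun k _ => mul_pos (hA k) (hB (n - k))) (hterm n)
  rw [card_range, Nat.cast_add_one] at hlog
  rw [div_lt_iff₀ hD] at hsmall ⊢
  linarith

theorem eventually_lt_log_sum_mul_div (hα0 : 0 < α) (hα1 : α < 1) (ha : 0 < a) (hb : 0 < b)
    (hA : ∀ n, 0 < A n) (hB : ∀ n, 0 < B n)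
    (hAs : Tendsto (fun n : ℕ => log (A n) / (a * n) ^ α) atTop (𝓝 1))
    (hBs : Tendsto (fun n : ℕ => log (B n) / (b * n) ^ α) atTop (𝓝 1)) {u : ℝ} (hu : u < 1) :
    ∀ᶠ n : ℕ in atTop,
      u < log (∑ k ∈ range (n + 1), A k * B (n - k)) / (convConst α a b * n) ^ α := by
  have hc := convConst_pos (α := α) ha hb
  obtain ⟨t, ht0, ht1, ht⟩ := exists_rpow_add_rpow_eq_convConst_rpow hα0 hα1 ha hb
  set k : ℕ → ℕ := fun n => ⌊t * n⌋₊
  have hk_le : ∀ n, k n ≤ n := fun n =>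
    Nat.floor_le_of_le (by nlinarith [(Nat.cast_nonneg n : (0 : ℝ) ≤ n)])
  have hk : Tendsto (fun n : ℕ => (k n : ℝ) / n) atTop (𝓝 t) :=
    (tendsto_nat_floor_mul_div_atTop ht0.le).comp tendsto_natCast_atTop_atTop
  have hk' : Tendsto (fun n : ℕ => ((n - k n : ℕ) : ℝ) / n) atTop (𝓝 (1 - t)) := by
    refine (tendsto_const_nhds.sub hk).congr' ?_
    filter_upwards [eventually_ne_atTop 0] with n hn
    rw [Nat.cast_sub (hk_le n), sub_div, div_self (Nat.cast_ne_zero.2 hn)]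
  have hsplit := (tendsto_comp_div_rpow_mul hα0.le ha hc ht0 hAs hk).add
    (tendsto_comp_div_rpow_mul hα0.le hb hc (sub_pos.2 ht1) hBs hk')
  rw [div_rpow (by positivity) hc.le, div_rpow (by nlinarith) hc.le, ← add_div, ht,
    div_self (by positivity)] at hsplit
  filter_upwards [hsplit.eventually (eventually_gt_nhds hu)] with n hn
  refine hn.trans_le ?_
  rw [← add_div, ← log_mul (hA _).ne' (hB _).ne']
  refine div_le_div_of_nonneg_right (log_le_log (mul_pos (hA _) (hB _)) ?_) (by positivity)
  exact single_le_sum (f := fun i => A i * B (n - i)) (fun i _ => (mul_pos (hA i) (hB _)).le)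
    (mem_range.2 (Nat.lt_succ_of_le (hk_le n)))

end Convolution

theorem stmt18 (α a b : ℝ) (hα0 : 0 < α) (hα1 : α < 1) (ha : 0 < a) (hb : 0 < b)
    (A B : ℕ → ℝ) (hA : ∀ n, 0 < A n) (hB : ∀ n, 0 < B n)
    (hAs : Tendsto (fun n : ℕ => Real.log (A n) / (a * n) ^ α) atTop (nhds 1))
    (hBs : Tendsto (fun n : ℕ => Real.log (B n) / (b * n) ^ α) atTop (nhds 1)) :
    Tendsto
      (fun n : ℕ =>
        Real.log (∑ k ∈ Finset.range (n + 1), A k * B (n - k)) /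
          (((a ^ (α / (1 - α)) + b ^ (α / (1 - α))) ^ ((1 - α) / α)) * n) ^ α)
      atTop (nhds 1) :=
  tendsto_order.2
    ⟨fun _ hu => eventually_lt_log_sum_mul_div hα0 hα1 ha hb hA hB hAs hBs hu,
      fun _ hu => eventually_log_sum_mul_div_lt hα0 hα1 ha hb hA hB hAs hBs hu⟩
end
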